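/- arXiv:2012.13207 — 4 statements merged into one kernel-verified Lean document; each statement's English description precedes it below -/
import Mathlib

section
/- Let φ ∈ H^∞(𝔻) be inner. Then the operator V = [[φ(0), P_ℂ|_{Q_φ}],[M_z* M_φ|_ℂ, M_z*|_{Q_φ}]] on ℂ ⊕ Q_φ is unitary. -/
/-!
Put `φ = M_φ 1` and `x = c φ + q`. Since `‖φ‖ = 1` and `q ⊥ ran M_φ ∋ φ`, `‖x‖² = |c|² + ‖q‖²`,
and `V (c, q) = (⟪1, x⟫, M_z* x)`. The Wold decomposition `x = ⟪1, x⟫ 1 + M_z M_z* x` is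
orthogonal, which gives the norm identity. Conversely `(d, r)` is the image of the coordinates of
`x = d 1 + M_z r`; this `x` lies in `ℂ φ ⊕ Q_φ = (ran M_φ M_z)ᗮ` because `1 ⊥ ran M_z` and
`⟪M_z r, M_z M_φ y⟫ = ⟪r, M_φ y⟫ = 0`.
-/

open ContinuousLinearMap
open scoped InnerProductSpace

section Shift

variable {H : Type*} [NormedAddCommGroup H] [InnerProductSpace ℂ H]

lemma norm_smul_add_sq_of_inner_eq_zero {u q : H} (hu : ‖u‖ = 1) (huq : ⟪u, q⟫_ℂ = 0) (c : ℂ) :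
    ‖c • u + q‖ ^ 2 = ‖c‖ ^ 2 + ‖q‖ ^ 2 := by
  simp [norm_add_sq (𝕜 := ℂ), inner_smul_left, huq, norm_smul, hu]

variable {M : H →L[ℂ] H}

local notation "Q" => (LinearMap.range (M : H →ₗ[ℂ] H))ᗮ

lemma inner_apply_eq_zero_of_mem_orthogonal_range (q : Q) (y : H) : ⟪M y, (q : H)⟫_ℂ = 0 :=
  inner_eq_zero_symm.mp ((Submodule.mem_orthogonal' _ _).mp q.2 _ ⟨y, rfl⟩)

variable [CompleteSpace H] {S : H →L[ℂ] H} {e : H}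

lemma adjoint_apply_apply_of_norm_map (hS : ∀ x, ‖S x‖ = ‖x‖) (x : H) : adjoint S (S x) = x :=
  DFunLike.congr_fun ((norm_map_iff_adjoint_comp_self S).mp hS) x

lemma inner_apply_eq_zero_of_adjoint_eq_zero (he : adjoint S e = 0) (y : H) :
    ⟪e, S y⟫_ℂ = 0 := by
  rw [← adjoint_inner_left, he, inner_zero_left]

lemma inner_smul_add_apply_of_adjoint_eq_zero (he : adjoint S e = 0) (he1 : ‖e‖ = 1)
    (d : ℂ) (r : H) : ⟪e, d • e + S r⟫_ℂ = d := by
  rw [inner_add_right, inner_smul_right, inner_self_eq_norm_sq_to_K, he1,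
    inner_apply_eq_zero_of_adjoint_eq_zero he]
  simp

lemma adjoint_smul_add_apply_of_adjoint_eq_zero (hS : ∀ x, ‖S x‖ = ‖x‖) (he : adjoint S e = 0)
    (d : ℂ) (r : H) : adjoint S (d • e + S r) = r := by
  rw [map_add, map_smul, he, smul_zero, zero_add, adjoint_apply_apply_of_norm_map hS]

lemma norm_sq_eq_norm_inner_sq_add_norm_adjoint_sq (hS : ∀ x, ‖S x‖ = ‖x‖)
    (he : adjoint S e = 0) (he1 : ‖e‖ = 1) (hdecomp : ∀ x, S (adjoint S x) + ⟪e, x⟫_ℂ • e = x)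
    (x : H) : ‖x‖ ^ 2 = ‖⟪e, x⟫_ℂ‖ ^ 2 + ‖adjoint S x‖ ^ 2 := by
  conv_lhs => rw [← hdecomp x, add_comm]
  rw [norm_smul_add_sq_of_inner_eq_zero he1 (inner_apply_eq_zero_of_adjoint_eq_zero he _), hS]

lemma inner_apply_eq_mul_inner_of_inner_apply_apply_eq_zero
    (hdecomp : ∀ x, S (adjoint S x) + ⟪e, x⟫_ℂ • e = x) {x : H}
    (hx : ∀ y, ⟪x, M (S y)⟫_ℂ = 0) (y : H) : ⟪x, M y⟫_ℂ = ⟪x, M e⟫_ℂ * ⟪e, y⟫_ℂ := by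
  conv_lhs => rw [← hdecomp y]
  rw [map_add, map_smul, inner_add_right, hx, inner_smul_right, zero_add, mul_comm]

lemma sub_smul_mem_orthogonal_range (hM : ∀ x, ‖M x‖ = ‖x‖)
    (hdecomp : ∀ x, S (adjoint S x) + ⟪e, x⟫_ℂ • e = x) {x : H}
    (hx : ∀ y, ⟪x, M (S y)⟫_ℂ = 0) : x - ⟪M e, x⟫_ℂ • M e ∈ Q := by
  rw [Submodule.mem_orthogonal']
  rintro _ ⟨y, rfl⟩
  rw [ContinuousLinearMap.coe_coe, inner_sub_left, inner_smul_left,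
    (LinearMap.norm_map_iff_inner_map_map M).mp hM, inner_conj_symm,
    inner_apply_eq_mul_inner_of_inner_apply_apply_eq_zero hdecomp hx, sub_self]

lemma inner_smul_add_apply_apply_eq_zero (hS : ∀ x, ‖S x‖ = ‖x‖) (hcomm : Commute S M)
    (he : adjoint S e = 0) (d : ℂ) (r : Q) (y : H) : ⟪d • e + S r, M (S y)⟫_ℂ = 0 := by
  rw [show M (S y) = S (M y) from DFunLike.congr_fun hcomm.eq.symm y, inner_add_left,
    inner_smul_left, inner_apply_eq_zero_of_adjoint_eq_zero he,
    (LinearMap.norm_map_iff_inner_map_map S).mp hS, mul_zero, zero_add]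
  exact inner_eq_zero_symm.mp (inner_apply_eq_zero_of_mem_orthogonal_range r y)

lemma colligation_norm_sq (hS : ∀ x, ‖S x‖ = ‖x‖) (hM : ∀ x, ‖M x‖ = ‖x‖)
    (he : adjoint S e = 0) (he1 : ‖e‖ = 1)
    (hdecomp : ∀ x, S (adjoint S x) + ⟪e, x⟫_ℂ • e = x) (V : ℂ × Q → ℂ × Q)
    (hV₁ : ∀ c q, (V (c, q)).1 = ⟪e, c • M e + q⟫_ℂ)
    (hV₂ : ∀ c q, ((V (c, q)).2 : H) = adjoint S (c • M e + q)) (c : ℂ) (q : Q) :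
    ‖(V (c, q)).1‖ ^ 2 + ‖(V (c, q)).2‖ ^ 2 = ‖c‖ ^ 2 + ‖q‖ ^ 2 := by
  rw [hV₁, Submodule.coe_norm (V (c, q)).2, hV₂,
    ← norm_sq_eq_norm_inner_sq_add_norm_adjoint_sq hS he he1 hdecomp,
    norm_smul_add_sq_of_inner_eq_zero (by rw [hM, he1])
      (inner_apply_eq_zero_of_mem_orthogonal_range q e), Submodule.coe_norm]

lemma colligation_bijective (hS : ∀ x, ‖S x‖ = ‖x‖) (hM : ∀ x, ‖M x‖ = ‖x‖)
    (hcomm : Commute S M) (he : adjoint S e = 0) (he1 : ‖e‖ = 1)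
    (hdecomp : ∀ x, S (adjoint S x) + ⟪e, x⟫_ℂ • e = x) (V : ℂ × Q → ℂ × Q)
    (hV₁ : ∀ c q, (V (c, q)).1 = ⟪e, c • M e + q⟫_ℂ)
    (hV₂ : ∀ c q, ((V (c, q)).2 : H) = adjoint S (c • M e + q)) :
    Function.Bijective V := by
  let W : ℂ × Q → ℂ × Q := fun p =>
    (⟪M e, p.1 • e + S p.2⟫_ℂ, ⟨_, sub_smul_mem_orthogonal_range hM hdecomp
      (inner_smul_add_apply_apply_eq_zero hS hcomm he p.1 p.2)⟩)
  refine Function.bijective_iff_has_inverse.2 ⟨W, fun ⟨c, q⟩ => ?_, fun ⟨d, r⟩ => ?_⟩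
  · have hx : (V (c, q)).1 • e + S (V (c, q)).2 = c • M e + q := by
      rw [hV₁, hV₂, add_comm, hdecomp]
    have hc : ⟪M e, c • M e + q⟫_ℂ = c := by
      rw [inner_add_right, inner_smul_right, inner_self_eq_norm_sq_to_K, hM, he1,
        inner_apply_eq_zero_of_mem_orthogonal_range q e]
      simp
    refine Prod.ext ?_ (Subtype.ext ?_) <;> simp only [W, hx, hc, add_sub_cancel_left]
  · have hx (c : ℂ) : c • M e + (d • e + S r - c • M e) = d • e + S r := add_sub_cancel _ _
    refine Prod.ext ?_ (Subtype.ext ?_)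
    · rw [hV₁, hx, inner_smul_add_apply_of_adjoint_eq_zero he he1]
    · rw [hV₂, hx, adjoint_smul_add_apply_of_adjoint_eq_zero hS he]

end Shift

/-- Abstract model of the Hardy space: `one` is the constant `1`, `Mz` the shift (an isometry with
`Mz* one = 0` and `Mz Mz* + P_ℂ = I`), `Mφ` multiplication by `φ = Mφ one`, `Q = (ran M_φ)ᗮ`,
`T = M_z*|_Q`, `qφ = M_z* φ` and `φ(0) = ⟪1, φ⟫`. Unitarity of `V` is expressed as preservation
of the Hilbert-sum norm of `ℂ ⊕ Q` together with bijectivity. -/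
theorem stmt_3_general {H : Type*} [NormedAddCommGroup H] [InnerProductSpace ℂ H] [CompleteSpace H]
    (Mz Mφ : H →L[ℂ] H) (one : H) (hone : ‖one‖ = 1)
    (hMz : ∀ x, ‖Mz x‖ = ‖x‖) (hMφ : ∀ x, ‖Mφ x‖ = ‖x‖)
    (hcomm : Mz ∘L Mφ = Mφ ∘L Mz)
    (hzero : adjoint Mz one = 0)
    (hshift : ∀ x : H, Mz ((adjoint Mz) x) + (inner ℂ one x : ℂ) • one = x)
    (Q : Submodule ℂ H) (hQ : Q = (LinearMap.range (Mφ : H →ₗ[ℂ] H))ᗮ)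
    (T : Q →L[ℂ] Q) (hT : ∀ x : Q, (T x : H) = adjoint Mz (x : H))
    (qφ : Q) (hqφ : (qφ : H) = adjoint Mz (Mφ one)) :
    (∀ (c : ℂ) (q : Q),
      ‖(inner ℂ one (Mφ one) : ℂ) * c + (inner ℂ one (q : H) : ℂ)‖ ^ 2 + ‖c • qφ + T q‖ ^ 2 =
        ‖c‖ ^ 2 + ‖q‖ ^ 2) ∧
    Function.Bijective (fun p : ℂ × Q =>
      ((inner ℂ one (Mφ one) : ℂ) * p.1 + (inner ℂ one ((p.2 : Q) : H) : ℂ),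
        p.1 • qφ + T p.2)) := by
  subst hQ
  let V (p : ℂ × (LinearMap.range (Mφ : H →ₗ[ℂ] H))ᗮ) :=
    (⟪one, Mφ one⟫_ℂ * p.1 + ⟪one, (p.2 : H)⟫_ℂ, p.1 • qφ + T p.2)
  have hV₁ (c : ℂ) (q : (LinearMap.range (Mφ : H →ₗ[ℂ] H))ᗮ) :
      (V (c, q)).1 = ⟪one, c • Mφ one + q⟫_ℂ := by
    rw [inner_add_right, inner_smul_right, mul_comm]
  have hV₂ (c : ℂ) (q : (LinearMap.range (Mφ : H →ₗ[ℂ] H))ᗮ) :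
      ((V (c, q)).2 : H) = adjoint Mz (c • Mφ one + q) := by
    rw [Submodule.coe_add, Submodule.coe_smul, hT, hqφ, map_add, map_smul]
  exact ⟨colligation_norm_sq hMz hMφ hzero hone hshift V hV₁ hV₂,
    colligation_bijective hMz hMφ hcomm hzero hone hshift V hV₁ hV₂⟩

/-- For an inner function `φ` on `𝔻`, the colligation
`V = [[φ(0), P_ℂ|_{Q_φ}],[M_z* M_φ|_ℂ, M_z*|_{Q_φ}]]` on `ℂ ⊕ Q_φ` is unitary.
Abstract model of the Hardy space: `H` Hilbert, `one` the constant `1` (a unit vector),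
`Mz` the shift: an isometry with `Mz* one = 0`, `Mz Mz* + P_ℂ = I` and `{Mz^m one}` total;
`Mφ` the isometric multiplication by `φ = Mφ one`, commuting with `Mz`; `Q = (ran M_φ)ᗮ`,
`T = M_z*|_Q`, `qφ = M_z* φ ∈ Q` and `φ(0) = ⟪1, φ⟫`.  Unitarity of
`V (c, q) = (φ(0) c + ⟪1, q⟫, c • qφ + T q)` is expressed as: `V` preserves the norm of the
Hilbert direct sum `ℂ ⊕ Q` and is bijective. -/
theorem stmt_3 {H : Type*} [NormedAddCommGroup H] [InnerProductSpace ℂ H] [CompleteSpace H]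
    (Mz Mφ : H →L[ℂ] H) (one : H) (hone : ‖one‖ = 1)
    (hMz : ∀ x, ‖Mz x‖ = ‖x‖) (hMφ : ∀ x, ‖Mφ x‖ = ‖x‖)
    (hcomm : Mz ∘L Mφ = Mφ ∘L Mz)
    (hzero : adjoint Mz one = 0)
    (hshift : ∀ x : H, Mz ((adjoint Mz) x) + (inner ℂ one x : ℂ) • one = x)
    (hcyclic :
      (Submodule.span ℂ (Set.range fun m : ℕ => (Mz ^ m) one)).topologicalClosure = ⊤)
    (Q : Submodule ℂ H) (hQ : Q = (LinearMap.range (Mφ : H →ₗ[ℂ] H))ᗮ)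
    (T : Q →L[ℂ] Q) (hT : ∀ x : Q, (T x : H) = adjoint Mz (x : H))
    (qφ : Q) (hqφ : (qφ : H) = adjoint Mz (Mφ one)) :
    (∀ (c : ℂ) (q : Q),
      ‖(inner ℂ one (Mφ one) : ℂ) * c + (inner ℂ one (q : H) : ℂ)‖ ^ 2 + ‖c • qφ + T q‖ ^ 2 =
        ‖c‖ ^ 2 + ‖q‖ ^ 2) ∧
    Function.Bijective (fun p : ℂ × Q =>
      ((inner ℂ one (Mφ one) : ℂ) * p.1 + (inner ℂ one ((p.2 : Q) : H) : ℂ),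
        p.1 • qφ + T p.2)) :=
  stmt_3_general Mz Mφ one hone hMz hMφ hcomm hzero hshift Q hQ T hT qφ hqφ
end

section
/- There is no isometric colligation V = [[−t, B₁, B₂],[C₁, D₁, D₂],[C₂, 0, D₃]] on ℂ ⊕ H₁ ⊕ H₂ with D₁ ∈ C₀· whose transfer function equals φ_t(z₁,z₂) = (z₁z₂ - t)/(1 - tz₁z₂) for fixed t ∈ (0,1). In particular, comparing coefficients of z₁^n forces B₁D₁^{n-1}C₁ = 0 for all n ≥ 1, which together with B₁*B₁ + D₁*D₁ = I and D₁ ∈ C₀· forces C₁ = 0, then B₁ = 0, then D₁*D₁ = I, contradicting D₁ ∈ C₀· (unless H₁ = 0, in which case the coefficient of z₁z₂, namely (1-t²), cannot be produced). -/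
/-!
On the line `z₂ = 0` the transfer function is `-t + Σ z₁ⁿ⁺¹ B₁ D₁ⁿ C₁`, while `φ_t(z₁, 0) = -t`;
by uniqueness of power series `B₁ D₁ⁿ C₁ = 0` for all `n`. Since `V` is isometric,
`‖B₁ h‖² + ‖D₁ h‖² = ‖h‖²`, so the orbit `D₁ⁿ C₁` has constant norm; as `D₁ ∈ C₀·` it tends
to `0`, hence `C₁ = 0`. Orthogonality of the first two columns of `V` then forces `B₁ = 0`.
But with `B₁ = 0` the Neumann series of the transfer function only involves the `H₂`-components
`z₂ⁿ D₃ⁿ`, so it does not depend on `z₁`, whereas `φ_t(z, z) ≠ φ_t(0, z)` for small `z ≠ 0`.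
-/

open ContinuousLinearMap Filter Metric

section

variable {H₁ H₂ : Type*}
  [NormedAddCommGroup H₁] [InnerProductSpace ℂ H₁] [CompleteSpace H₁]
  [NormedAddCommGroup H₂] [InnerProductSpace ℂ H₂] [CompleteSpace H₂]

/-- `E(z) = z₁ I_{H₁} ⊕ z₂ I_{H₂}` on `H₁ ⊕ H₂`. -/
noncomputable def Eop (z₁ z₂ : ℂ) : (H₁ × H₂) →L[ℂ] H₁ × H₂ :=
  (z₁ • ContinuousLinearMap.fst ℂ H₁ H₂).prod (z₂ • ContinuousLinearMap.snd ℂ H₁ H₂)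

/-- The block operator `D = [[D₁, D₂],[0, D₃]]` on `H₁ ⊕ H₂`. -/
noncomputable def Dop (D₁ : H₁ →L[ℂ] H₁) (D₂ : H₂ →L[ℂ] H₁) (D₃ : H₂ →L[ℂ] H₂) :
    (H₁ × H₂) →L[ℂ] H₁ × H₂ :=
  (D₁.coprod D₂).prod ((0 : H₁ →L[ℂ] H₂).coprod D₃)

/-- The transfer function `τ_V(z) = a + B (I - E(z)D)^{-1} E(z) C` of the colligation
`V = [[a, B₁, B₂],[C₁, D₁, D₂],[C₂, 0, D₃]]`. -/
noncomputable def transferFn (a : ℂ) (B₁ : H₁ →L[ℂ] ℂ) (B₂ : H₂ →L[ℂ] ℂ)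
    (C₁ : H₁) (C₂ : H₂) (D₁ : H₁ →L[ℂ] H₁) (D₂ : H₂ →L[ℂ] H₁) (D₃ : H₂ →L[ℂ] H₂)
    (z₁ z₂ : ℂ) : ℂ :=
  a + (B₁.coprod B₂)
    ((Ring.inverse (1 - (Eop z₁ z₂) * (Dop D₁ D₂ D₃)) :
        (H₁ × H₂) →L[ℂ] H₁ × H₂) ((Eop z₁ z₂) (C₁, C₂)))

end

open scoped Topology

theorem eq_zero_of_hasSum_mul_pow_eq_zero {𝕜 : Type*} [NontriviallyNormedField 𝕜]
    [CompleteSpace 𝕜] {a : ℕ → 𝕜} {M : ℝ} (hM : ∀ n, ‖a n‖ ≤ M)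
    (h : ∀ᶠ z in 𝓝[≠] 0, HasSum (fun n => a n * z ^ n) 0) : a = 0 := by
  set p := FormalMultilinearSeries.ofScalars 𝕜 a
  have hradius : 1 ≤ p.radius := by
    simpa using p.le_radius_of_bound M (r := 1) fun n => by simpa [p] using hM n
  have hp : HasFPowerSeriesAt p.sum p 0 :=
    (p.hasFPowerSeriesOnBall (zero_lt_one.trans_le hradius)).hasFPowerSeriesAt
  have hsum : ∀ᶠ z in 𝓝[≠] 0, p.sum z = 0 := h.mono fun z hz => by
    simpa [p, ← FormalMultilinearSeries.ofScalarsSum.eq_1,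
      FormalMultilinearSeries.ofScalars_sum_eq] using hz.tsum_eq
  have hzero : p = 0 :=
    hp.eq_zero_of_eventually (hp.analyticAt.frequently_zero_iff_eventually_zero.1 hsum.frequently)
  exact (FormalMultilinearSeries.ofScalars_series_eq_zero 𝕜).1 hzero

theorem hasSum_apply_ring_inverse_one_sub {𝕜 X Y : Type*} [NontriviallyNormedField 𝕜]
    [NormedAddCommGroup X] [NormedSpace 𝕜 X] [CompleteSpace X] [NormedAddCommGroup Y]
    [NormedSpace 𝕜 Y] {K : X →L[𝕜] X} (hK : ‖K‖ < 1) (B : X →L[𝕜] Y) (v : X) :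
    HasSum (fun n => B ((K ^ n) v)) (B (Ring.inverse (1 - K) v)) :=
  (hasSum_geom_series_inverse K hK).mapL (B.comp (ContinuousLinearMap.apply 𝕜 X v))

theorem sub_div_one_sub_mul_ne_neg {t : ℝ} (ht : t ∈ Set.Ioo (0 : ℝ) 1) {w : ℂ} (hw₀ : w ≠ 0)
    (hw : ‖w‖ < 1) : (w - t) / (1 - t * w) ≠ -t := by
  have htw : ‖(t : ℂ) * w‖ < 1 := by
    rw [norm_mul, Complex.norm_real, Real.norm_of_nonneg ht.1.le]
    nlinarith [norm_nonneg w, ht.2]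
  have hden : 1 - (t : ℂ) * w ≠ 0 := fun h => by
    rw [sub_eq_zero] at h
    simp [← h] at htw
  have hone_sub_sq : (1 - (t : ℂ) ^ 2) ≠ 0 := by
    rw [← Complex.ofReal_pow, ← Complex.ofReal_one, ← Complex.ofReal_sub, Complex.ofReal_ne_zero]
    nlinarith [ht.1, ht.2]
  rw [Ne, div_eq_iff hden]
  intro h
  exact mul_ne_zero hw₀ hone_sub_sq (by linear_combination h)

section Colligation

variable {H₁ H₂ : Type*} [NormedAddCommGroup H₁] [NormedSpace ℂ H₁]
  [NormedAddCommGroup H₂] [NormedSpace ℂ H₂]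

/-- `V = [[a, B₁, B₂], [C₁, D₁, D₂], [C₂, 0, D₃]]` preserves the Hilbert-sum norm of
`ℂ ⊕ H₁ ⊕ H₂` (written out, since the norm on a product type is the sup norm). -/
def IsIsometricColligation (a : ℂ) (B₁ : H₁ →L[ℂ] ℂ) (B₂ : H₂ →L[ℂ] ℂ) (C₁ : H₁) (C₂ : H₂)
    (D₁ : H₁ →L[ℂ] H₁) (D₂ : H₂ →L[ℂ] H₁) (D₃ : H₂ →L[ℂ] H₂) : Prop :=
  ∀ (c : ℂ) (h₁ : H₁) (h₂ : H₂),
    ‖a * c + B₁ h₁ + B₂ h₂‖ ^ 2 + ‖c • C₁ + D₁ h₁ + D₂ h₂‖ ^ 2 + ‖c • C₂ + D₃ h₂‖ ^ 2 =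
      ‖c‖ ^ 2 + ‖h₁‖ ^ 2 + ‖h₂‖ ^ 2

namespace IsIsometricColligation

variable {a : ℂ} {B₁ : H₁ →L[ℂ] ℂ} {B₂ : H₂ →L[ℂ] ℂ} {C₁ : H₁} {C₂ : H₂}
  {D₁ : H₁ →L[ℂ] H₁} {D₂ : H₂ →L[ℂ] H₁} {D₃ : H₂ →L[ℂ] H₂}

theorem norm_sq_B₁_add_norm_sq_D₁ (hV : IsIsometricColligation a B₁ B₂ C₁ C₂ D₁ D₂ D₃) (h : H₁) :
    ‖B₁ h‖ ^ 2 + ‖D₁ h‖ ^ 2 = ‖h‖ ^ 2 := by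
  simpa using hV 0 h 0

theorem norm_sq_add_norm_sq_C₁_add_norm_sq_C₂ (hV : IsIsometricColligation a B₁ B₂ C₁ C₂ D₁ D₂ D₃) :
    ‖a‖ ^ 2 + ‖C₁‖ ^ 2 + ‖C₂‖ ^ 2 = 1 := by
  simpa using hV 1 0 0

theorem norm_pow_D₁_apply_le (hV : IsIsometricColligation a B₁ B₂ C₁ C₂ D₁ D₂ D₃) (n : ℕ) (x : H₁) :
    ‖(D₁ ^ n) x‖ ≤ ‖x‖ := by
  induction n with
  | zero => simp
  | succ n ih =>
    rw [pow_succ', mul_apply_eq_comp]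
    refine le_trans ?_ ih
    refine (pow_le_pow_iff_left₀ (norm_nonneg _) (norm_nonneg _) two_ne_zero).1 ?_
    linarith [hV.norm_sq_B₁_add_norm_sq_D₁ ((D₁ ^ n) x), sq_nonneg ‖B₁ ((D₁ ^ n) x)‖]

theorem norm_pow_D₁_apply_eq (hV : IsIsometricColligation a B₁ B₂ C₁ C₂ D₁ D₂ D₃) {x : H₁}
    (hx : ∀ n, B₁ ((D₁ ^ n) x) = 0) (n : ℕ) :
    ‖(D₁ ^ n) x‖ = ‖x‖ := by
  induction n with
  | zero => simp
  | succ n ih =>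
    have h := hV.norm_sq_B₁_add_norm_sq_D₁ ((D₁ ^ n) x)
    rw [hx n, norm_zero, zero_pow two_ne_zero, zero_add, ← mul_apply_eq_comp, ← pow_succ'] at h
    rw [← ih]
    exact (pow_left_inj₀ (norm_nonneg _) (norm_nonneg _) two_ne_zero).1 h

theorem B₁_eq_zero (hV : IsIsometricColligation a B₁ B₂ C₁ C₂ D₁ D₂ D₃) (ha : a ≠ 0)
    (hC₁ : C₁ = 0) : B₁ = 0 := by
  -- With `C₁ = 0`, orthogonality of the first two columns of `V` reads
  -- `Re (a * conj (B₁ h)) = 0`; applied to `h` and to `I • h` it gives `a * conj (B₁ h) = 0`.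
  have hre : ∀ h, (a * (starRingEnd ℂ) (B₁ h)).re = 0 := fun h => by
    have hcol := hV 1 h 0
    have hnorm := hV.norm_sq_add_norm_sq_C₁_add_norm_sq_C₂
    have hB₁ := hV.norm_sq_B₁_add_norm_sq_D₁ h
    simp only [hC₁, mul_one, map_zero, add_zero, one_smul, zero_add, norm_one, norm_zero,
      one_pow, ne_eq, OfNat.ofNat_ne_zero, not_false_eq_true, zero_pow] at hcol hnorm
    rw [Complex.sq_norm, Complex.normSq_add, ← Complex.sq_norm, ← Complex.sq_norm] at hcol
    linarith
  ext h
  have hI := hre (Complex.I • h)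
  simp only [map_smul, smul_eq_mul, map_mul, Complex.conj_I, Complex.mul_re, Complex.mul_im,
    Complex.neg_re, Complex.neg_im, Complex.I_re, Complex.I_im] at hI
  have hconj : a * (starRingEnd ℂ) (B₁ h) = 0 := by
    refine Complex.ext (hre h) ?_
    simp only [Complex.mul_im, Complex.zero_im]
    linarith
  simpa [ha] using hconj

end IsIsometricColligation

end Colligation

section

variable {H₁ H₂ : Type*} [NormedAddCommGroup H₁] [InnerProductSpace ℂ H₁]
  [NormedAddCommGroup H₂] [InnerProductSpace ℂ H₂]

theorem Eop_apply (z₁ z₂ : ℂ) (x : H₁ × H₂) :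
    (Eop z₁ z₂ : (H₁ × H₂) →L[ℂ] H₁ × H₂) x = (z₁ • x.1, z₂ • x.2) := rfl

theorem norm_Eop_le (z₁ z₂ : ℂ) :
    ‖(Eop z₁ z₂ : (H₁ × H₂) →L[ℂ] H₁ × H₂)‖ ≤ max ‖z₁‖ ‖z₂‖ := by
  refine opNorm_le_bound _ (norm_nonneg z₁ |>.trans (le_max_left _ _)) fun x => ?_
  rw [Eop_apply, Prod.norm_def, Prod.norm_def, norm_smul, norm_smul]
  exact max_le
    (mul_le_mul (le_max_left _ _) (le_max_left _ _) (norm_nonneg _) (by positivity))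
    (mul_le_mul (le_max_right _ _) (le_max_right _ _) (norm_nonneg _) (by positivity))

theorem eventually_norm_Eop_mul_lt_one (K : (H₁ × H₂) →L[ℂ] H₁ × H₂) :
    ∀ᶠ z : ℂ in 𝓝 0, ∀ z₁ z₂ : ℂ, ‖z₁‖ ≤ ‖z‖ → ‖z₂‖ ≤ ‖z‖ → ‖Eop z₁ z₂ * K‖ < 1 := by
  have hsmall : ∀ᶠ z : ℂ in 𝓝 0, ‖z‖ * ‖K‖ < 1 :=
    (continuous_norm.mul continuous_const).continuousAt.eventually_lt continuousAt_const
      (by simp)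
  filter_upwards [hsmall] with z hz z₁ z₂ h₁ h₂
  calc ‖Eop z₁ z₂ * K‖ ≤ ‖(Eop z₁ z₂ : (H₁ × H₂) →L[ℂ] H₁ × H₂)‖ * ‖K‖ := opNorm_comp_le _ _
    _ ≤ ‖z‖ * ‖K‖ := by gcongr; exact (norm_Eop_le z₁ z₂).trans (max_le h₁ h₂)
    _ < 1 := hz

variable {D₁ : H₁ →L[ℂ] H₁} {D₂ : H₂ →L[ℂ] H₁} {D₃ : H₂ →L[ℂ] H₂}

theorem Eop_mul_Dop_apply (z₁ z₂ : ℂ) (x : H₁ × H₂) :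
    (Eop z₁ z₂ * Dop D₁ D₂ D₃ : (H₁ × H₂) →L[ℂ] H₁ × H₂) x =
      (z₁ • (D₁ x.1 + D₂ x.2), z₂ • D₃ x.2) := by
  simp [Eop_apply, Dop]

theorem pow_Eop_zero_mul_Dop_apply_inl (z : ℂ) (x : H₁) (n : ℕ) :
    ((Eop z 0 * Dop D₁ D₂ D₃ : (H₁ × H₂) →L[ℂ] H₁ × H₂) ^ n) (x, 0) =
      (z ^ n • (D₁ ^ n) x, 0) := by
  induction n with
  | zero => simp
  | succ n ih =>
    rw [pow_succ', mul_apply_eq_comp, ih, Eop_mul_Dop_apply, pow_succ', pow_succ', mul_smul,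
      mul_apply_eq_comp]
    simp

theorem snd_pow_Eop_mul_Dop_apply (z₁ z₂ : ℂ) (x : H₁ × H₂) (n : ℕ) :
    (((Eop z₁ z₂ * Dop D₁ D₂ D₃ : (H₁ × H₂) →L[ℂ] H₁ × H₂) ^ n) x).2 =
      z₂ ^ n • (D₃ ^ n) x.2 := by
  induction n with
  | zero => simp
  | succ n ih =>
    rw [pow_succ', mul_apply_eq_comp, Eop_mul_Dop_apply, ih, pow_succ', pow_succ', mul_smul,
      mul_apply_eq_comp]
    exact congrArg (z₂ • ·) (map_smul D₃ _ _)

variable (a : ℂ) (B₁ : H₁ →L[ℂ] ℂ) (B₂ : H₂ →L[ℂ] ℂ) (C₁ : H₁) (C₂ : H₂) {z₁ z₂ : ℂ}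

theorem hasSum_transferFn [CompleteSpace H₁] [CompleteSpace H₂]
    (hK : ‖Eop z₁ z₂ * Dop D₁ D₂ D₃‖ < 1) :
    HasSum
      (fun n => (B₁.coprod B₂)
        (((Eop z₁ z₂ * Dop D₁ D₂ D₃ : (H₁ × H₂) →L[ℂ] H₁ × H₂) ^ n) (Eop z₁ z₂ (C₁, C₂))))
      (transferFn a B₁ B₂ C₁ C₂ D₁ D₂ D₃ z₁ z₂ - a) := by
  simpa [transferFn] using hasSum_apply_ring_inverse_one_sub hK (B₁.coprod B₂) _

theorem hasSum_transferFn_zero_right [CompleteSpace H₁] [CompleteSpace H₂] {z : ℂ}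
    (hK : ‖Eop z 0 * Dop D₁ D₂ D₃‖ < 1) :
    HasSum (fun n => z * (B₁ ((D₁ ^ n) C₁) * z ^ n))
      (transferFn a B₁ B₂ C₁ C₂ D₁ D₂ D₃ z 0 - a) := by
  convert hasSum_transferFn a B₁ B₂ C₁ C₂ hK using 2 with n
  rw [Eop_apply, zero_smul, pow_Eop_zero_mul_Dop_apply_inl]
  simp only [coprod_apply, map_smul, map_zero, add_zero, smul_eq_mul]
  ring

theorem transferFn_congr_left_of_B₁_zero [CompleteSpace H₁] [CompleteSpace H₂] {z₁' : ℂ}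
    (hK : ‖Eop z₁ z₂ * Dop D₁ D₂ D₃‖ < 1) (hK' : ‖Eop z₁' z₂ * Dop D₁ D₂ D₃‖ < 1) :
    transferFn a 0 B₂ C₁ C₂ D₁ D₂ D₃ z₁ z₂ = transferFn a 0 B₂ C₁ C₂ D₁ D₂ D₃ z₁' z₂ := by
  have hterms : ∀ z : ℂ, ∀ n : ℕ, ((0 : H₁ →L[ℂ] ℂ).coprod B₂)
      (((Eop z z₂ * Dop D₁ D₂ D₃ : (H₁ × H₂) →L[ℂ] H₁ × H₂) ^ n)
        (Eop z z₂ (C₁, C₂))) = B₂ (z₂ ^ n • (D₃ ^ n) (z₂ • C₂)) :=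
    fun z n => by
      rw [coprod_apply, zero_apply, zero_add, snd_pow_Eop_mul_Dop_apply, Eop_apply]
  have h := hasSum_transferFn a 0 B₂ C₁ C₂ hK
  have h' := hasSum_transferFn a 0 B₂ C₁ C₂ hK'
  simp only [hterms] at h h'
  exact sub_left_injective (h.unique h')

end

section

variable {H₁ H₂ : Type*}
  [NormedAddCommGroup H₁] [InnerProductSpace ℂ H₁] [CompleteSpace H₁]
  [NormedAddCommGroup H₂] [InnerProductSpace ℂ H₂] [CompleteSpace H₂]

/-- There is no isometric colligation
`V = [[−t, B₁, B₂],[C₁, D₁, D₂],[C₂, 0, D₃]]` on `ℂ ⊕ H₁ ⊕ H₂` with `D₁ ∈ C₀·` whose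
transfer function equals `φ_t(z₁,z₂) = (z₁z₂ - t)/(1 - t z₁z₂)`, for fixed `t ∈ (0,1)`.
The isometry of `V` is expressed by preservation of the norm of `ℂ ⊕ H₁ ⊕ H₂`. -/
theorem stmt_12 (t : ℝ) (ht : t ∈ Set.Ioo (0 : ℝ) 1)
    (B₁ : H₁ →L[ℂ] ℂ) (B₂ : H₂ →L[ℂ] ℂ) (C₁ : H₁) (C₂ : H₂)
    (D₁ : H₁ →L[ℂ] H₁) (D₂ : H₂ →L[ℂ] H₁) (D₃ : H₂ →L[ℂ] H₂)
    (hV : ∀ (c : ℂ) (h₁ : H₁) (h₂ : H₂),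
      ‖(-(t : ℂ)) * c + B₁ h₁ + B₂ h₂‖ ^ 2 + ‖c • C₁ + D₁ h₁ + D₂ h₂‖ ^ 2 +
        ‖c • C₂ + D₃ h₂‖ ^ 2 = ‖c‖ ^ 2 + ‖h₁‖ ^ 2 + ‖h₂‖ ^ 2)
    (hD₁ : ∀ x : H₁, Tendsto (fun n : ℕ => (D₁ ^ n) x) atTop (nhds 0))
    (hτ : ∀ z₁ ∈ ball (0 : ℂ) 1, ∀ z₂ ∈ ball (0 : ℂ) 1,
      transferFn (-(t : ℂ)) B₁ B₂ C₁ C₂ D₁ D₂ D₃ z₁ z₂ =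
        (z₁ * z₂ - (t : ℂ)) / (1 - (t : ℂ) * z₁ * z₂)) :
    False := by
  replace hV : IsIsometricColligation (-(t : ℂ)) B₁ B₂ C₁ C₂ D₁ D₂ D₃ := hV
  have hsmall : ∀ᶠ z in 𝓝[≠] (0 : ℂ), z ≠ 0 ∧ z ∈ ball (0 : ℂ) 1 ∧ ∀ z₁ z₂ : ℂ,
      ‖z₁‖ ≤ ‖z‖ → ‖z₂‖ ≤ ‖z‖ → ‖Eop z₁ z₂ * Dop D₁ D₂ D₃‖ < 1 :=
    eventually_mem_nhdsWithin.and <| nhdsWithin_le_nhds <|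
      Filter.Eventually.and (ball_mem_nhds 0 one_pos) (eventually_norm_Eop_mul_lt_one _)
  have hcoeff : (fun n => B₁ ((D₁ ^ n) C₁)) = 0 := by
    refine eq_zero_of_hasSum_mul_pow_eq_zero (M := ‖B₁‖ * ‖C₁‖)
      (fun n => (B₁.le_opNorm _).trans (by gcongr; exact hV.norm_pow_D₁_apply_le n C₁))
      (hsmall.mono fun z ⟨hz₀, hz₁, hK⟩ => ?_)
    have h := hasSum_transferFn_zero_right (-(t : ℂ)) B₁ B₂ C₁ C₂ (hK z 0 le_rfl (by simp))
    rw [hτ z hz₁ 0 (mem_ball_self one_pos), mul_zero, mul_zero, zero_sub, sub_zero, div_one,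
      sub_self, ← mul_zero z] at h
    exact (hasSum_mul_left_iff hz₀).1 h
  have hC₁ : C₁ = 0 := by
    have hconst := hV.norm_pow_D₁_apply_eq (congrFun hcoeff)
    exact norm_eq_zero.1 <| tendsto_nhds_unique
      (tendsto_const_nhds.congr fun n => (hconst n).symm) (by simpa using (hD₁ C₁).norm)
  obtain rfl : B₁ = 0 := hV.B₁_eq_zero (by simpa using ht.1.ne') hC₁
  obtain ⟨z, hz₀, hz₁, hK⟩ := hsmall.exists
  have h := transferFn_congr_left_of_B₁_zero (-(t : ℂ)) B₂ C₁ C₂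
    (hK z z le_rfl le_rfl) (hK 0 z (by simp) le_rfl)
  rw [hτ z hz₁ z hz₁, hτ 0 (mem_ball_self one_pos) z hz₁, mul_assoc] at h
  refine sub_div_one_sub_mul_ne_neg ht (mul_ne_zero hz₀ hz₀) ?_ (by simpa using h)
  rw [norm_mul]
  exact mul_lt_one_of_nonneg_of_lt_one_left (norm_nonneg z) (mem_ball_zero_iff.1 hz₁)
    (mem_ball_zero_iff.1 hz₁).le

end
end

section
/- Let V₁ = [[a₁, B₁],[C₁, D₁]] ∈ B(ℂ ⊕ H₁) and V₂ = [[a₂, B₂],[C₂, D₂]] ∈ B(ℂ ⊕ H₂) be co-isometries. Then V = [[a₁a₂, B₁, a₁B₂],[a₂C₁, D₁, C₁B₂],[C₂, 0, D₂]] is a co-isometry on ℂ ⊕ H₁ ⊕ H₂. -/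
/-!
The adjoint of `V` factors through those of `V₁` and `V₂`: with `e = ā₁ d + ⟪C₁, k₁⟫` the first
component of `V₁* (d, k₁)`, the first and third components of `V* (d, k₁, k₂)` are exactly
`V₂* (e, k₂)`, while its second component is the second component of `V₁* (d, k₁)`. Hence
`‖V* (d, k₁, k₂)‖² = ‖e‖² + ‖k₂‖² + ‖B₁* d + D₁* k₁‖² = ‖d‖² + ‖k₁‖² + ‖k₂‖²`.
-/

open ContinuousLinearMap

namespace ContinuousLinearMap

variable {𝕜 E F : Type*} [RCLike 𝕜]
  [NormedAddCommGroup E] [InnerProductSpace 𝕜 E] [CompleteSpace E]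
  [NormedAddCommGroup F] [InnerProductSpace 𝕜 F] [CompleteSpace F]

theorem adjoint_smulRight_apply (B : F →L[𝕜] 𝕜) (c k : E) :
    adjoint (B.smulRight c) k = adjoint B (inner 𝕜 c k) := by
  refine ext_inner_left 𝕜 fun v => ?_
  rw [adjoint_inner_right, adjoint_inner_right, smulRight_apply, inner_smul_left,
    RCLike.inner_apply, mul_comm]

theorem adjoint_smul_apply (a : 𝕜) (B : F →L[𝕜] E) (k : E) :
    adjoint (a • B) k = adjoint B ((starRingEnd 𝕜) a • k) := by
  rw [LinearIsometryEquiv.map_smulₛₗ, smul_apply, map_smul]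

end ContinuousLinearMap

/-- If `V₁ = [[a₁, B₁],[C₁, D₁]]` and `V₂ = [[a₂, B₂],[C₂, D₂]]` are
co-isometries on `ℂ ⊕ H₁` and `ℂ ⊕ H₂`, then
`V = [[a₁a₂, B₁, a₁B₂],[a₂C₁, D₁, C₁B₂],[C₂, 0, D₂]]` is a co-isometry on `ℂ ⊕ H₁ ⊕ H₂`.
A colligation `[[a, B],[C, D]]` (with `B : H →L ℂ` and column `C ∈ H`) is a co-isometry iff
its adjoint `(d, k) ↦ (ā d + ⟪C, k⟫, B* d + D* k)` preserves the norm of `ℂ ⊕ H`; the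
entry `C₁B₂ : H₂ → H₁` is `h ↦ (B₂ h) • C₁`, i.e. `B₂.smulRight C₁`. -/
theorem stmt_15 {H₁ H₂ : Type*}
    [NormedAddCommGroup H₁] [InnerProductSpace ℂ H₁] [CompleteSpace H₁]
    [NormedAddCommGroup H₂] [InnerProductSpace ℂ H₂] [CompleteSpace H₂]
    (a₁ a₂ : ℂ) (B₁ : H₁ →L[ℂ] ℂ) (B₂ : H₂ →L[ℂ] ℂ) (C₁ : H₁) (C₂ : H₂)
    (D₁ : H₁ →L[ℂ] H₁) (D₂ : H₂ →L[ℂ] H₂)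
    (hV₁ : ∀ (d : ℂ) (k : H₁),
      ‖(starRingEnd ℂ) a₁ * d + (inner ℂ C₁ k : ℂ)‖ ^ 2 +
        ‖(adjoint B₁) d + (adjoint D₁) k‖ ^ 2 = ‖d‖ ^ 2 + ‖k‖ ^ 2)
    (hV₂ : ∀ (d : ℂ) (k : H₂),
      ‖(starRingEnd ℂ) a₂ * d + (inner ℂ C₂ k : ℂ)‖ ^ 2 +
        ‖(adjoint B₂) d + (adjoint D₂) k‖ ^ 2 = ‖d‖ ^ 2 + ‖k‖ ^ 2) :
    ∀ (d : ℂ) (k₁ : H₁) (k₂ : H₂),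
      ‖(starRingEnd ℂ) (a₁ * a₂) * d + (inner ℂ (a₂ • C₁) k₁ : ℂ) + (inner ℂ C₂ k₂ : ℂ)‖ ^ 2 +
        ‖(adjoint B₁) d + (adjoint D₁) k₁‖ ^ 2 +
        ‖(adjoint (a₁ • B₂)) d + (adjoint (B₂.smulRight C₁)) k₁ + (adjoint D₂) k₂‖ ^ 2 =
        ‖d‖ ^ 2 + ‖k₁‖ ^ 2 + ‖k₂‖ ^ 2 := by
  intro d k₁ k₂
  set e : ℂ := (starRingEnd ℂ) a₁ * d + inner ℂ C₁ k₁
  have first_row : (starRingEnd ℂ) (a₁ * a₂) * d + inner ℂ (a₂ • C₁) k₁ + inner ℂ C₂ k₂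
      = (starRingEnd ℂ) a₂ * e + inner ℂ C₂ k₂ := by
    rw [inner_smul_left, map_mul]
    ring
  have third_row : adjoint (a₁ • B₂) d + adjoint (B₂.smulRight C₁) k₁ + adjoint D₂ k₂
      = adjoint B₂ e + adjoint D₂ k₂ := by
    rw [adjoint_smul_apply, adjoint_smulRight_apply, ← map_add, smul_eq_mul]
  rw [first_row, third_row]
  linear_combination hV₂ e k₂ + hV₁ d k₁
end

section
/- Let V = [[a, B₁, B₂],[C₁, D₁, D₂],[C₂, 0, D₃]] be a unitary operator on ℂ ⊕ ℂ^p ⊕ ℂ^q with a ≠ 0 and D₃ invertible. Then a D₂ = C₁ B₂. -/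
/-!
The rows of a unitary matrix are orthonormal. Orthogonality of the third block row
`(C₂, 0, D₃)` to the first two gives `a C₂ᴴ + B₂ D₃ᴴ = 0` and `C₁ C₂ᴴ + D₂ D₃ᴴ = 0`.
Eliminating `C₂ᴴ` yields `(a D₂ - C₁ B₂) D₃ᴴ = 0`, and `D₃ᴴ` is invertible.
-/

open Matrix

namespace Matrix

variable {α : Type*} {k l m n n₁ n₂ : Type*}

theorem fromCols_add [Add α] (A₁ B₁ : Matrix m n₁ α) (A₂ B₂ : Matrix m n₂ α) :
    fromCols A₁ A₂ + fromCols B₁ B₂ = fromCols (A₁ + B₁) (A₂ + B₂) := by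
  ext i (j | j) <;> rfl

theorem of_const_mul [Semiring α] [Fintype l] [Unique l] (a : α) (X : Matrix l n α) :
    of (fun _ _ : l => a) * X = a • X := by
  ext i j
  simp [mul_apply, Subsingleton.elim default i]

theorem fromBlocks_mem_unitaryGroup_iff [CommRing α] [StarRing α] [Fintype l] [Fintype m]
    [DecidableEq l] [DecidableEq m]
    {A : Matrix l l α} {B : Matrix l m α} {C : Matrix m l α} {D : Matrix m m α} :
    fromBlocks A B C D ∈ unitaryGroup (l ⊕ m) α ↔
      A * Aᴴ + B * Bᴴ = 1 ∧ A * Cᴴ + B * Dᴴ = 0 ∧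
        C * Aᴴ + D * Bᴴ = 0 ∧ C * Cᴴ + D * Dᴴ = 1 := by
  rw [mem_unitaryGroup_iff, star_eq_conjTranspose, fromBlocks_conjTranspose,
    fromBlocks_multiply, ← fromBlocks_one, fromBlocks_inj]

theorem smul_eq_mul_of_smul_add_mul_eq_zero [CommRing α] [Fintype l] [Fintype n] [DecidableEq n]
    (a : α) {X B : Matrix l n α} {E : Matrix n n α} {Y : Matrix k l α} {D : Matrix k n α}
    (hE : IsUnit E) (hX : a • X + B * E = 0) (hY : Y * X + D * E = 0) : a • D = Y * B := by
  obtain ⟨_⟩ := hE.nonempty_invertible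
  rw [← mul_left_inj_of_invertible E]
  calc a • D * E = a • (D * E) := smul_mul a D E
    _ = -(Y * (a • X)) := by rw [eq_neg_of_add_eq_zero_right hY, Matrix.mul_smul, smul_neg]
    _ = Y * B * E := by
      rw [eq_neg_of_add_eq_zero_left hX, Matrix.mul_neg, neg_neg, Matrix.mul_assoc]

end Matrix

theorem stmt_18_general {p q : ℕ} (a : ℂ)
    (B₁ : Matrix (Fin 1) (Fin p) ℂ) (B₂ : Matrix (Fin 1) (Fin q) ℂ)
    (C₁ : Matrix (Fin p) (Fin 1) ℂ) (C₂ : Matrix (Fin q) (Fin 1) ℂ)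
    (D₁ : Matrix (Fin p) (Fin p) ℂ) (D₂ : Matrix (Fin p) (Fin q) ℂ)
    (D₃ : Matrix (Fin q) (Fin q) ℂ)
    (hD₃ : IsUnit D₃)
    (hU : fromBlocks (Matrix.of fun _ _ : Fin 1 => a) (fromCols B₁ B₂)
        (fromRows C₁ C₂) (fromBlocks D₁ D₂ 0 D₃) ∈
      Matrix.unitaryGroup (Fin 1 ⊕ (Fin p ⊕ Fin q)) ℂ) :
    a • D₂ = C₁ * B₂ := by
  obtain ⟨-, h₁₂, -, h₂₂⟩ := fromBlocks_mem_unitaryGroup_iff.mp hU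
  have hrow₁₃ : a • C₂ᴴ + B₂ * D₃ᴴ = 0 := by
    rw [conjTranspose_fromRows_eq_fromCols_conjTranspose, fromBlocks_conjTranspose, mul_fromCols,
      fromCols_mul_fromBlocks, fromCols_add, ← fromCols_zero, fromCols_ext_iff] at h₁₂
    simpa [of_const_mul] using h₁₂.2
  have hrow₂₃ : C₁ * C₂ᴴ + D₂ * D₃ᴴ = 0 := by
    rw [conjTranspose_fromRows_eq_fromCols_conjTranspose, fromBlocks_conjTranspose,
      fromRows_mul_fromCols, fromBlocks_multiply, fromBlocks_add, ← fromBlocks_one,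
      fromBlocks_inj] at h₂₂
    simpa using h₂₂.2.1
  exact smul_eq_mul_of_smul_add_mul_eq_zero a (isUnit_star.mpr hD₃) hrow₁₃ hrow₂₃

/-- Let `V = [[a, B₁, B₂],[C₁, D₁, D₂],[C₂, 0, D₃]]` be a unitary operator on
`ℂ ⊕ ℂ^p ⊕ ℂ^q` with `a ≠ 0` and `D₃` invertible. Then `a D₂ = C₁ B₂`. -/
theorem stmt_18 {p q : ℕ} (a : ℂ)
    (B₁ : Matrix (Fin 1) (Fin p) ℂ) (B₂ : Matrix (Fin 1) (Fin q) ℂ)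
    (C₁ : Matrix (Fin p) (Fin 1) ℂ) (C₂ : Matrix (Fin q) (Fin 1) ℂ)
    (D₁ : Matrix (Fin p) (Fin p) ℂ) (D₂ : Matrix (Fin p) (Fin q) ℂ)
    (D₃ : Matrix (Fin q) (Fin q) ℂ)
    (ha : a ≠ 0) (hD₃ : IsUnit D₃)
    (hU : fromBlocks (Matrix.of fun _ _ : Fin 1 => a) (fromCols B₁ B₂)
        (fromRows C₁ C₂) (fromBlocks D₁ D₂ 0 D₃) ∈
      Matrix.unitaryGroup (Fin 1 ⊕ (Fin p ⊕ Fin q)) ℂ) :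
    a • D₂ = C₁ * B₂ :=
  stmt_18_general a B₁ B₂ C₁ C₂ D₁ D₂ D₃ hD₃ hU
end
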